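/- Let H be the heart of a bounded t-structure on a triangulated category T, and suppose x ∈ T satisfies x ∈ [[a,b]]_H with a < b, and Hom_T(x, x[i]) = 0 for all i < 0. Then Hom_T(H^b_H(x), H^a_H(x)) = 0. -/

import Mathlib

/-!
Boundedness and the vanishing of `H^i(x)` outside `[a, b]` put `x` in `t.le b ⊓ t.ge a`, so
`τ_{≤ b} x ≅ x` and `τ_{≤ a} x ≅ τ_{≥ a} τ_{≤ a} x`. A morphism `f : H^b(x) ⟶ H^a(x)` is then the
middle of the composite
`x⟦b⟧ ⟶ (τ_{≥ b} τ_{≤ b} x)⟦b⟧ = H^b(x) ⟶ H^a(x) ≅ (τ_{≤ a} x)⟦a⟧ ⟶ x⟦a⟧`,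
which is a shift of a morphism `x ⟶ x⟦a - b⟧`, hence zero. Precomposing with the first map and
postcomposing with the last are injective on these Hom groups, because the fibre of
`τ_{≤ b} x ⟶ τ_{≥ b} τ_{≤ b} x` lies in `t.le (b - 1)` and the cone of `τ_{≤ a} x ⟶ x` in
`t.ge (a + 1)`.
-/

open CategoryTheory Limits Pretriangulated Triangulated

namespace TSt

variable {C : Type*} [Category C] [Preadditive C] [HasZeroObject C] [HasShift C ℤ]
  [∀ (n : ℤ), (shiftFunctor C n).Additive] [Pretriangulated C]

/-- The truncation `τ_{≤ n} A` with respect to a t-structure, defined (up to isomorphism)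
by the triangle `τ_{≤n} A → A → τ_{≥ n+1} A → `. -/
noncomputable def truncLEObj (t : TStructure C) (n : ℤ) (A : C) : C :=
  (t.exists_triangle A n (n + 1) rfl).choose

/-- The truncation `τ_{≥ n} A` with respect to a t-structure. -/
noncomputable def truncGEObj (t : TStructure C) (n : ℤ) (A : C) : C :=
  (t.exists_triangle A (n - 1) n (by omega)).choose_spec.choose

/-- The `n`-th cohomology object of `A` with respect to the t-structure `t`:
`H^n(A) = (τ_{≥ n} τ_{≤ n} A)⟦n⟧`, an object of the heart. -/
noncomputable def cohObj (t : TStructure C) (n : ℤ) (A : C) : C :=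
  (truncGEObj t n (truncLEObj t n A))⟦n⟧

/-- Membership in the heart of a t-structure. -/
def InHeart (t : TStructure C) (A : C) : Prop := t.le 0 A ∧ t.ge 0 A

/-- A t-structure is bounded if every object is bounded above and below for it. -/
def IsBoundedTStructure (t : TStructure C) : Prop :=
  ∀ X : C, ∃ a b : ℤ, t.ge a X ∧ t.le b X

/-- `x ∈ [a,b]_t` : the cohomology of `x` with respect to `t` vanishes outside `[a,b]`. -/
def MemIcc (t : TStructure C) (a b : ℤ) (x : C) : Prop :=
  ∀ i : ℤ, (i < a ∨ b < i) → IsZero (cohObj t i x)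

/-- `x ∈ [[a,b]]_t` : cohomology concentrated in `[a,b]`, nonzero at both endpoints. -/
def MemIccStrict (t : TStructure C) (a b : ℤ) (x : C) : Prop :=
  MemIcc t a b x ∧ ¬ IsZero (cohObj t a x) ∧ ¬ IsZero (cohObj t b x)

end TSt

namespace CategoryTheory

variable {C : Type*} [Category C] [Preadditive C] [HasShift C ℤ]
  [∀ (n : ℤ), (shiftFunctor C n).Additive]

lemma eq_zero_of_forall_hom_shift_sub_eq_zero {X Y : C} {a b : ℤ}
    (h : ∀ f : X ⟶ Y⟦a - b⟧, f = 0) (φ : X⟦b⟧ ⟶ Y⟦a⟧) : φ = 0 := by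
  have := h ((shiftFunctorCompIsoId C b (-b) (by lia)).inv.app X ≫ φ⟦-b⟧' ≫
    (shiftFunctorAdd' C a (-b) (a - b) (by lia)).inv.app Y)
  rwa [Preadditive.IsIso.comp_left_eq_zero, Preadditive.IsIso.comp_right_eq_zero,
    Functor.map_eq_zero_iff] at this

end CategoryTheory

namespace TSt

variable {C : Type*} [Category C] [Preadditive C] [HasZeroObject C] [HasShift C ℤ]
  [∀ (n : ℤ), (shiftFunctor C n).Additive] [Pretriangulated C]

section

variable (t : TStructure C)

lemma exists_distTriang_truncLEObj (n : ℤ) (A : C) :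
    ∃ (Y : C) (_ : t.IsGE Y (n + 1)) (f : truncLEObj t n A ⟶ A) (g : A ⟶ Y)
      (h : Y ⟶ (truncLEObj t n A)⟦(1 : ℤ)⟧), Triangle.mk f g h ∈ distTriang C := by
  obtain ⟨Y, -, hY, f, g, h, hT⟩ := (t.exists_triangle A n (n + 1) rfl).choose_spec
  exact ⟨Y, ⟨hY⟩, f, g, h, hT⟩

instance isLE_truncLEObj (n : ℤ) (A : C) : t.IsLE (truncLEObj t n A) n :=
  ⟨(t.exists_triangle A n (n + 1) rfl).choose_spec.choose_spec.choose⟩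

lemma exists_distTriang_truncGEObj (n : ℤ) (A : C) :
    ∃ (X : C) (_ : t.IsLE X (n - 1)) (f : X ⟶ A) (g : A ⟶ truncGEObj t n A)
      (h : truncGEObj t n A ⟶ X⟦(1 : ℤ)⟧), Triangle.mk f g h ∈ distTriang C := by
  obtain ⟨hX, -, f, g, h, hT⟩ :=
    (t.exists_triangle A (n - 1) n (by omega)).choose_spec.choose_spec
  exact ⟨_, ⟨hX⟩, f, g, h, hT⟩

instance isGE_truncGEObj (n : ℤ) (A : C) : t.IsGE (truncGEObj t n A) n :=
  ⟨(t.exists_triangle A (n - 1) n (by omega)).choose_spec.choose_spec.choose_spec.choose⟩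

lemma isGE_truncLEObj (m n : ℤ) (A : C) [t.IsGE A m] (hmn : m ≤ n + 2) :
    t.IsGE (truncLEObj t n A) m := by
  obtain ⟨Y, _, f, g, h, hT⟩ := exists_distTriang_truncLEObj t n A
  have : t.IsGE (Y⟦(-1 : ℤ)⟧) m :=
    have := t.isGE_shift Y (n + 1) (-1) (n + 2)
    t.isGE_of_ge _ m (n + 2)
  exact t.isGE₂ _ (inv_rot_of_distTriang _ hT) m this ‹t.IsGE A m›

lemma isLE_truncGEObj (m n : ℤ) (A : C) [t.IsLE A m] (hmn : n - 2 ≤ m) :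
    t.IsLE (truncGEObj t n A) m := by
  obtain ⟨X, _, f, g, h, hT⟩ := exists_distTriang_truncGEObj t n A
  have : t.IsLE (X⟦(1 : ℤ)⟧) m :=
    have := t.isLE_shift X (n - 1) 1 (n - 2)
    t.isLE_of_le _ (n - 2) m
  exact t.isLE₂ _ (rot_of_distTriang _ hT) m ‹t.IsLE A m› this

lemma nonempty_truncLEObj_iso (n : ℤ) (A : C) [t.IsLE A n] :
    Nonempty (truncLEObj t n A ≅ A) := by
  obtain ⟨Y, _, f, g, h, hT⟩ := exists_distTriang_truncLEObj t n A
  have := t.isLE_shift (truncLEObj t n A) n 1 (n - 1)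
  have : t.IsLE Y n := t.isLE₂ _ (rot_of_distTriang _ hT) n ‹t.IsLE A n›
    (t.isLE_of_le ((truncLEObj t n A)⟦(1 : ℤ)⟧) (n - 1) n)
  have : IsIso f := ((Triangle.mk f g h).isZero₃_iff_isIso₁ hT).1 (t.isZero Y n (n + 1))
  exact ⟨asIso f⟩

lemma nonempty_truncGEObj_iso (n : ℤ) (A : C) [t.IsGE A n] :
    Nonempty (A ≅ truncGEObj t n A) := by
  obtain ⟨X, _, f, g, h, hT⟩ := exists_distTriang_truncGEObj t n A
  have := t.isGE_shift (truncGEObj t n A) n (-1) (n + 1)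
  have : t.IsGE X n := t.isGE₂ _ (inv_rot_of_distTriang _ hT) n
    (t.isGE_of_ge ((truncGEObj t n A)⟦(-1 : ℤ)⟧) n (n + 1)) ‹t.IsGE A n›
  have : IsIso g := ((Triangle.mk f g h).isZero₁_iff_isIso₂ hT).1 (t.isZero X (n - 1) n)
  exact ⟨asIso g⟩

lemma isZero_truncGEObj_of_isZero_cohObj {n : ℤ} {A : C} (h : IsZero (cohObj t n A)) :
    IsZero (truncGEObj t n (truncLEObj t n A)) :=
  IsZero.of_full_of_faithful_of_isZero (shiftFunctor C n) _ h

lemma isLE_sub_one_of_isZero_cohObj (n : ℤ) (A : C) [t.IsLE A n]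
    (h : IsZero (cohObj t n A)) : t.IsLE A (n - 1) := by
  obtain ⟨eL⟩ := nonempty_truncLEObj_iso t n A
  obtain ⟨X, _, f, g, k, hT⟩ := exists_distTriang_truncGEObj t n (truncLEObj t n A)
  have : IsIso f := ((Triangle.mk f g k).isZero₃_iff_isIso₁ hT).1
    (isZero_truncGEObj_of_isZero_cohObj t h)
  exact t.isLE_of_iso (asIso f ≪≫ eL) (n - 1)

lemma isGE_add_one_of_isZero_cohObj (n : ℤ) (A : C) [t.IsGE A n]
    (h : IsZero (cohObj t n A)) : t.IsGE A (n + 1) := by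
  have := isGE_truncLEObj t n n A (by lia)
  obtain ⟨eG⟩ := nonempty_truncGEObj_iso t n (truncLEObj t n A)
  obtain ⟨Y, _, f, g, k, hT⟩ := exists_distTriang_truncLEObj t n A
  have : IsIso g := ((Triangle.mk f g k).isZero₁_iff_isIso₂ hT).1
    ((isZero_truncGEObj_of_isZero_cohObj t h).of_iso eG)
  exact t.isGE_of_iso (asIso g).symm (n + 1)

lemma isLE_of_isZero_cohObj_gt (A : C) (b : ℤ) {B : ℤ} (hB : t.IsLE A B)
    (h : ∀ i, b < i → IsZero (cohObj t i A)) : t.IsLE A b := by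
  rcases le_or_gt b B with hbB | hBb
  · induction B, hbB using Int.leInduction with
    | base => exact hB
    | succ B _ ih =>
      have := isLE_sub_one_of_isZero_cohObj t (B + 1) A (h _ (by lia))
      exact ih (t.isLE_of_le A (B + 1 - 1) B)
  · exact t.isLE_of_le A B b

lemma isGE_of_isZero_cohObj_lt (A : C) (a : ℤ) {a' : ℤ} (ha' : t.IsGE A a')
    (h : ∀ i, i < a → IsZero (cohObj t i A)) : t.IsGE A a := by
  rcases le_or_gt a' a with ha'a | ha'a
  · induction a', ha'a using Int.leInductionDown with
    | base => exact ha'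
    | pred a' _ ih =>
      have := isGE_add_one_of_isZero_cohObj t (a' - 1) A (h _ (by lia))
      exact ih (t.isGE_of_ge A a' (a' - 1 + 1))
  · exact t.isGE_of_ge A a a'

lemma eq_zero_of_mor₂_comp_eq_zero {T : Triangle C} (hT : T ∈ distTriang C) {n₀ n₁ : ℤ}
    (hn : n₀ ≤ n₁) (h₁ : t.IsLE T.obj₁ n₀) {Z : C} (hZ : t.IsGE Z n₁) {g : T.obj₃ ⟶ Z}
    (hg : T.mor₂ ≫ g = 0) : g = 0 := by
  obtain ⟨φ, rfl⟩ := T.yoneda_exact₃ hT g hg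
  rw [t.zero_of_isLE_of_isGE φ (n₀ - 1) n₁ (by lia) (t.isLE_shift T.obj₁ n₀ 1 (n₀ - 1)) hZ,
    comp_zero]

lemma eq_zero_of_comp_mor₁_eq_zero {T : Triangle C} (hT : T ∈ distTriang C) {n₀ n₁ : ℤ}
    (hn : n₀ ≤ n₁) (h₃ : t.IsGE T.obj₃ n₁) {W : C} (hW : t.IsLE W n₀) {g : W ⟶ T.obj₁}
    (hg : g ≫ T.mor₁ = 0) : g = 0 := by
  obtain ⟨φ, rfl⟩ := Triangle.coyoneda_exact₂ _ (inv_rot_of_distTriang _ hT) g hg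
  rw [t.zero_of_isLE_of_isGE φ n₀ (n₁ + 1) (by lia) hW (t.isGE_shift T.obj₃ n₁ (-1) (n₁ + 1))]
  exact zero_comp

lemma eq_zero_of_shift_map_mor₂_comp_eq_zero {T : Triangle C} (hT : T ∈ distTriang C) (k : ℤ)
    {n₀ n₁ : ℤ} (hn : n₀ ≤ n₁) (h₁ : t.IsLE (T.obj₁⟦k⟧) n₀) {Z : C} (hZ : t.IsGE Z n₁)
    {g : T.obj₃⟦k⟧ ⟶ Z} (hg : T.mor₂⟦k⟧' ≫ g = 0) : g = 0 :=
  eq_zero_of_mor₂_comp_eq_zero t (Triangle.shift_distinguished T hT k) hn h₁ hZ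
    (show (k.negOnePow • T.mor₂⟦k⟧') ≫ g = 0 by rw [Linear.units_smul_comp, hg, smul_zero])

lemma eq_zero_of_comp_shift_map_mor₁_eq_zero {T : Triangle C} (hT : T ∈ distTriang C) (k : ℤ)
    {n₀ n₁ : ℤ} (hn : n₀ ≤ n₁) (h₃ : t.IsGE (T.obj₃⟦k⟧) n₁) {W : C} (hW : t.IsLE W n₀)
    {g : W ⟶ T.obj₁⟦k⟧} (hg : g ≫ T.mor₁⟦k⟧' = 0) : g = 0 :=
  eq_zero_of_comp_mor₁_eq_zero t (Triangle.shift_distinguished T hT k) hn h₃ hW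
    (show g ≫ (k.negOnePow • T.mor₁⟦k⟧') = 0 by rw [Linear.comp_units_smul, hg, smul_zero])

end

/-- If `x ∈ [[a,b]]_H` with `a < b` and `x` has no negative
self-extensions, then `Hom(H^b(x), H^a(x)) = 0`. -/
theorem hom_top_to_bottom_cohomology_eq_zero
    (t : TStructure C) (ht : IsBoundedTStructure t) (x : C) (a b : ℤ) (hab : a < b)
    (hx : MemIccStrict t a b x)
    (hneg : ∀ i : ℤ, i < 0 → ∀ f : x ⟶ x⟦i⟧, f = 0) :
    ∀ f : cohObj t b x ⟶ cohObj t a x, f = 0 := by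
  unfold cohObj
  intro f
  obtain ⟨A, B, hA, hB⟩ := ht x
  have : t.IsLE x b := isLE_of_isZero_cohObj_gt t x b ⟨hB⟩ fun i hi => hx.1 i (.inr hi)
  have : t.IsGE x a := isGE_of_isZero_cohObj_lt t x a ⟨hA⟩ fun i hi => hx.1 i (.inl hi)
  have := isGE_truncLEObj t a a x (by lia)
  have := isLE_truncGEObj t b b (truncLEObj t b x) (by lia)
  obtain ⟨eb⟩ := nonempty_truncLEObj_iso t b x
  obtain ⟨ea⟩ := nonempty_truncGEObj_iso t a (truncLEObj t a x)
  obtain ⟨M, _, p, q, r, hTb⟩ := exists_distTriang_truncGEObj t b (truncLEObj t b x)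
  obtain ⟨Y, _, s, e, m, hTa⟩ := exists_distTriang_truncLEObj t a x
  have h₁ : (eb.inv ≫ q)⟦b⟧' ≫ f ≫ (ea.inv ≫ s)⟦a⟧' = 0 :=
    eq_zero_of_forall_hom_shift_sub_eq_zero (hneg (a - b) (by lia)) _
  have h₂ : q⟦b⟧' ≫ f ≫ (ea.inv ≫ s)⟦a⟧' = 0 := by simpa using h₁
  have h₃ : f ≫ (ea.inv ≫ s)⟦a⟧' = 0 :=
    eq_zero_of_shift_map_mor₂_comp_eq_zero t hTb b (by lia)
      (t.isLE_shift M (b - 1) b (-1)) (t.isGE_shift x a a 0) h₂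
  have h₄ : f ≫ ea.inv⟦a⟧' = 0 :=
    eq_zero_of_comp_shift_map_mor₁_eq_zero t hTa a (by lia)
      (t.isGE_shift Y (a + 1) a 1) (t.isLE_shift _ b b 0)
      (by simpa using h₃ : (f ≫ ea.inv⟦a⟧') ≫ s⟦a⟧' = 0)
  rwa [Preadditive.IsIso.comp_right_eq_zero] at h₄

end TSt
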